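/- arXiv:1905.11350 — 4 statements merged into one kernel-verified Lean document; each statement's English description precedes it below -/
import Mathlib

section
/- Talagrand's concentration inequality on the hypercube: for positive integers k ≤ n and any nonempty set F ⊆ {0,1}^n, letting F_{≥k} = {x ∈ {0,1}^n : dist(x,y) ≥ k for all y ∈ F}, the densities satisfy μ_n(F_{≥k}) · μ_n(F) ≤ e^{−k²/n}. -/
/-!
Write `d(x)` for the Hamming distance from `x` to `F`. By induction on `n`,
`(∑ₓ e^{t d(x)}) · |F| ≤ (2 + e^t + e^{-t})^n` for `t ≥ 0`: splitting the cube along the first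
coordinate into the fibres `F₀, F₁` of `F`, a point over `b` is within `d` of `F_b` and within
`d + 1` of the other fibre, and an elementary inequality, with a case split on how balanced
`|F₀|` and `|F₁|` are, closes the induction. As `2 + e^t + e^{-t} = 4 cosh² (t/2) ≤ 4 e^{t²/4}`,
counting the points with `d(x) ≥ k` gives `|F_{≥k}| · |F| ≤ 4^n e^{n t²/4 - t k}`, and
`t = 2k/n` yields the bound.
-/

open Finset

section HammingInfDist

variable {ι : Type*} [Fintype ι] {β : ι → Type*} [∀ i, DecidableEq (β i)]

-- The distance to the empty set is the junk value `sInf ∅ = 0`.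
noncomputable def hammingInfDist (F : Finset (∀ i, β i)) (x : ∀ i, β i) : ℕ :=
  sInf (hammingDist x '' (F : Set (∀ i, β i)))

variable {F : Finset (∀ i, β i)} {x y : ∀ i, β i}

lemma hammingInfDist_le (hy : y ∈ F) : hammingInfDist F x ≤ hammingDist x y :=
  Nat.sInf_le ⟨y, hy, rfl⟩

lemma exists_hammingDist_eq_hammingInfDist (hF : F.Nonempty) (x : ∀ i, β i) :
    ∃ y ∈ F, hammingDist x y = hammingInfDist F x :=
  Nat.sInf_mem ((coe_nonempty.2 hF).image _) |>.imp fun _ ⟨hy, h⟩ => ⟨hy, h⟩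

lemma le_hammingInfDist {k : ℕ} (hF : F.Nonempty) (h : ∀ y ∈ F, k ≤ hammingDist x y) :
    k ≤ hammingInfDist F x := by
  obtain ⟨y, hy, hxy⟩ := exists_hammingDist_eq_hammingInfDist hF x
  exact hxy ▸ h y hy

end HammingInfDist

section Cons

variable {n : ℕ} {β : Type*}

lemma hammingDist_cons [DecidableEq β] (a b : β) (x y : Fin n → β) :
    hammingDist (Fin.cons a x : Fin (n + 1) → β) (Fin.cons b y) =
      hammingDist x y + if a = b then 0 else 1 := by
  simp only [hammingDist, card_filter, Fin.sum_univ_succ, Fin.cons_zero, Fin.cons_succ, ne_eq]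
  split_ifs <;> simp_all [add_comm]

lemma sum_pi_fin_succ [Fintype β] {M : Type*} [AddCommMonoid M] (f : (Fin (n + 1) → β) → M) :
    ∑ z, f z = ∑ b, ∑ x, f (Fin.cons b x) := by
  rw [← Fintype.sum_prod_type']
  exact (Fintype.sum_equiv (Fin.consEquiv fun _ => β) _ _ fun _ => rfl).symm

noncomputable def fiberCons (F : Finset (Fin (n + 1) → β)) (b : β) : Finset (Fin n → β) :=
  F.preimage (@Fin.cons n (fun _ => β) b) (Fin.cons_right_injective (α := fun _ => β) b).injOn

lemma mem_fiberCons {F : Finset (Fin (n + 1) → β)} {b : β} {x : Fin n → β} :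
    x ∈ fiberCons F b ↔ Fin.cons b x ∈ F :=
  mem_preimage

lemma sum_card_fiberCons [Fintype β] (F : Finset (Fin (n + 1) → β)) :
    ∑ b, #(fiberCons F b) = #F := by
  classical
  have hcard {m : ℕ} (s : Finset (Fin m → β)) : #s = ∑ x, if x ∈ s then 1 else 0 := by simp
  simp only [hcard, mem_fiberCons, sum_pi_fin_succ (fun z => if z ∈ F then 1 else 0)]

lemma hammingInfDist_cons_le [DecidableEq β] {F : Finset (Fin (n + 1) → β)} {c : β}
    (hc : (fiberCons F c).Nonempty) (b : β) (x : Fin n → β) :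
    hammingInfDist F (Fin.cons b x) ≤
      hammingInfDist (fiberCons F c) x + if b = c then 0 else 1 := by
  obtain ⟨y, hy, hxy⟩ := exists_hammingDist_eq_hammingInfDist hc x
  rw [← hxy, ← hammingDist_cons]
  exact hammingInfDist_le (mem_fiberCons.1 hy)

end Cons

lemma sum_exp_mul_le_of_le_add {ι : Type*} [Fintype ι] {t : ℝ} (ht : 0 ≤ t) {f g : ι → ℕ}
    {m : ℕ} (h : ∀ i, f i ≤ g i + m) :
    ∑ i, Real.exp (t * f i) ≤ Real.exp (t * m) * ∑ i, Real.exp (t * g i) := by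
  rw [mul_sum]
  gcongr with i
  rw [← Real.exp_add, ← mul_add]
  gcongr
  exact_mod_cast (h i).trans_eq (add_comm _ _)

lemma two_add_exp_add_exp_neg_le (t : ℝ) :
    2 + Real.exp t + Real.exp (-t) ≤ 4 * Real.exp (t ^ 2 / 4) := by
  have hcosh : 2 + Real.exp t + Real.exp (-t) = 4 * Real.cosh (t / 2) ^ 2 := by
    have h₁ : Real.exp (t / 2) ^ 2 = Real.exp t := by rw [← Real.exp_nat_mul]; ring_nf
    have h₂ : Real.exp (-(t / 2)) ^ 2 = Real.exp (-t) := by rw [← Real.exp_nat_mul]; ring_nf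
    have h₃ : Real.exp (t / 2) * Real.exp (-(t / 2)) = 1 := by rw [← Real.exp_add]; simp
    rw [Real.cosh_eq]
    linear_combination -h₁ - h₂ - 2 * h₃
  calc 2 + Real.exp t + Real.exp (-t) = 4 * Real.cosh (t / 2) ^ 2 := hcosh
    _ ≤ 4 * Real.exp ((t / 2) ^ 2 / 2) ^ 2 := by
      gcongr
      exact Real.cosh_le_exp_half_sq _
    _ = 4 * Real.exp (t ^ 2 / 4) := by rw [← Real.exp_nat_mul]; ring_nf

lemma add_mul_add_le_of_mul_le {E U a b C S₀ S₁ : ℝ} (hE : 0 < E) (hb : 0 ≤ b) (hba : E * b ≤ a)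
    (hU : 0 ≤ U) (hUa : U * a ≤ C) (h₀ : S₀ ≤ U) (h₁ : S₁ ≤ E * U) :
    (S₀ + S₁) * (a + b) ≤ (2 + E + E⁻¹) * C := by
  have hUb : U * b ≤ E⁻¹ * C :=
    calc U * b = E⁻¹ * (U * (E * b)) := by field_simp
      _ ≤ E⁻¹ * C := by gcongr; exact (mul_le_mul_of_nonneg_left hba hU).trans hUa
  have ha : 0 ≤ a := (mul_nonneg hE.le hb).trans hba
  calc (S₀ + S₁) * (a + b) ≤ ((1 + E) * U) * (a + b) :=
        mul_le_mul_of_nonneg_right (by linarith) (by linarith)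
    _ = (1 + E) * (U * a + U * b) := by ring
    _ ≤ (1 + E) * (C + E⁻¹ * C) := by gcongr
    _ = (2 + E + E⁻¹) * C := by field_simp; ring

lemma add_mul_add_le_of_balanced {E U V a b C S₀ S₁ : ℝ} (ha : 0 < a) (hb : 0 < b)
    (hab : a ≤ E * b) (hba : b ≤ E * a) (hC : 0 ≤ C) (hUa : U * a ≤ C) (hVb : V * b ≤ C)
    (hS : S₀ + S₁ ≤ U + V) : (S₀ + S₁) * (a + b) ≤ (2 + E + E⁻¹) * C := by
  have hE : 0 < E := pos_of_mul_pos_left (ha.trans_le hab) hb.le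
  -- `(E b - a)(E a - b) ≥ 0` rearranges to `a / b + b / a ≤ E + E⁻¹`
  have hsq : a ^ 2 + b ^ 2 ≤ (E + E⁻¹) * (a * b) := by
    have := mul_nonneg (sub_nonneg.2 hab) (sub_nonneg.2 hba)
    field_simp
    nlinarith
  have hcross : U * b + V * a ≤ (E + E⁻¹) * C := by
    have hab0 : 0 < a * b := mul_pos ha hb
    refine le_of_mul_le_mul_right ?_ hab0
    calc (U * b + V * a) * (a * b) = (U * a) * b ^ 2 + (V * b) * a ^ 2 := by ring
      _ ≤ C * b ^ 2 + C * a ^ 2 := by gcongr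
      _ = C * (a ^ 2 + b ^ 2) := by ring
      _ ≤ C * ((E + E⁻¹) * (a * b)) := by gcongr
      _ = (E + E⁻¹) * C * (a * b) := by ring
  calc (S₀ + S₁) * (a + b) ≤ (U + V) * (a + b) := by gcongr
    _ = U * a + V * b + (U * b + V * a) := by ring
    _ ≤ C + C + (E + E⁻¹) * C := by gcongr
    _ = (2 + E + E⁻¹) * C := by ring

lemma add_mul_add_le {E U V a b C S₀ S₁ : ℝ} (hE : 0 < E) (ha : 0 ≤ a) (hb : 0 ≤ b) (hC : 0 ≤ C)
    (hA : 0 < a → 0 ≤ U ∧ U * a ≤ C ∧ S₀ ≤ U ∧ S₁ ≤ E * U)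
    (hB : 0 < b → 0 ≤ V ∧ V * b ≤ C ∧ S₁ ≤ V ∧ S₀ ≤ E * V) :
    (S₀ + S₁) * (a + b) ≤ (2 + E + E⁻¹) * C := by
  rcases le_or_gt (E * b) a with hba | hba
  · rcases ha.eq_or_lt with rfl | ha
    · obtain rfl : b = 0 := le_antisymm (nonpos_of_mul_nonpos_right hba hE) hb
      simp only [add_zero, mul_zero]
      positivity
    obtain ⟨hU, hUa, h₀, h₁⟩ := hA ha
    exact add_mul_add_le_of_mul_le hE hb hba hU hUa h₀ h₁
  rcases le_or_gt (E * a) b with hab | hab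
  · obtain ⟨hV, hVb, h₁, h₀⟩ := hB (by nlinarith)
    rw [add_comm S₀, add_comm a]
    exact add_mul_add_le_of_mul_le hE ha hab hV hVb h₁ h₀
  have ha : 0 < a := by nlinarith
  have hb : 0 < b := by nlinarith
  obtain ⟨-, hUa, h₀, -⟩ := hA ha
  obtain ⟨-, hVb, h₁, -⟩ := hB hb
  exact add_mul_add_le_of_balanced ha hb hba.le hab.le hC hUa hVb (add_le_add h₀ h₁)

theorem sum_exp_mul_hammingInfDist_mul_card_le {t : ℝ} (ht : 0 ≤ t) :
    ∀ {n : ℕ} {F : Finset (Fin n → Bool)}, F.Nonempty →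
      (∑ x, Real.exp (t * hammingInfDist F x)) * #F ≤ (2 + Real.exp t + Real.exp (-t)) ^ n
  | 0, F, ⟨y, hy⟩ => by
    have hd (x : Fin 0 → Bool) : hammingInfDist F x = 0 :=
      Nat.le_zero.1 ((hammingInfDist_le hy).trans_eq (by simp [Subsingleton.elim x y]))
    have hF : (#F : ℝ) ≤ 1 := by exact_mod_cast card_le_one_of_subsingleton F
    simpa [hd] using hF
  | n + 1, F, hF => by
    have fiber (b : Bool) : 0 < (#(fiberCons F b) : ℝ) →
        0 ≤ ∑ x, Real.exp (t * hammingInfDist (fiberCons F b) x) ∧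
        (∑ x, Real.exp (t * hammingInfDist (fiberCons F b) x)) * #(fiberCons F b) ≤
          (2 + Real.exp t + Real.exp (-t)) ^ n ∧
        ∑ x, Real.exp (t * hammingInfDist F (Fin.cons b x)) ≤
          ∑ x, Real.exp (t * hammingInfDist (fiberCons F b) x) ∧
        ∑ x, Real.exp (t * hammingInfDist F (Fin.cons (!b) x)) ≤
          Real.exp t * ∑ x, Real.exp (t * hammingInfDist (fiberCons F b) x) := by
      intro hb
      have hb : (fiberCons F b).Nonempty := card_pos.1 (by exact_mod_cast hb)
      refine ⟨by positivity, sum_exp_mul_hammingInfDist_mul_card_le ht hb, ?_, ?_⟩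
      · simpa using sum_exp_mul_le_of_le_add ht (m := 0) fun x => by
          simpa using hammingInfDist_cons_le hb b x
      · simpa using sum_exp_mul_le_of_le_add ht (m := 1) fun x => by
          simpa using hammingInfDist_cons_le hb (!b) x
    rw [sum_pi_fin_succ, ← sum_card_fiberCons, Fintype.sum_bool, Fintype.sum_bool, pow_succ',
      Real.exp_neg, Nat.cast_add]
    simp only [Real.exp_neg] at fiber
    exact add_mul_add_le (Real.exp_pos t) (Nat.cast_nonneg _) (Nat.cast_nonneg _) (by positivity)
      (fiber true) (fiber false)

theorem card_filter_le_hammingDist_mul_card_le {n : ℕ} (k : ℕ) (F : Finset (Fin n → Bool))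
    {t : ℝ} (ht : 0 ≤ t) :
    (#{x | ∀ y ∈ F, k ≤ hammingDist x y} : ℝ) * #F ≤
      4 ^ n * Real.exp (n * t ^ 2 / 4 - t * k) := by
  rcases F.eq_empty_or_nonempty with rfl | hF
  · simp only [card_empty, Nat.cast_zero, mul_zero]
    positivity
  set G : Finset (Fin n → Bool) := {x | ∀ y ∈ F, k ≤ hammingDist x y}
  have hG : (#G : ℝ) * Real.exp (t * k) ≤ ∑ x, Real.exp (t * hammingInfDist F x) := by
    rw [← nsmul_eq_mul]
    refine (card_nsmul_le_sum G _ _ fun x hx => ?_).trans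
      (sum_le_univ_sum_of_nonneg fun _ => (Real.exp_pos _).le)
    gcongr
    exact_mod_cast le_hammingInfDist hF (mem_filter.1 hx).2
  have hpow : (2 + Real.exp t + Real.exp (-t)) ^ n ≤ 4 ^ n * Real.exp (n * t ^ 2 / 4) := by
    rw [mul_div_assoc, Real.exp_nat_mul, ← mul_pow]
    exact pow_le_pow_left₀ (by positivity) (two_add_exp_add_exp_neg_le t) n
  rw [Real.exp_sub, mul_div_assoc', le_div_iff₀ (Real.exp_pos _)]
  calc (#G : ℝ) * #F * Real.exp (t * k) = #G * Real.exp (t * k) * #F := by ring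
    _ ≤ (∑ x, Real.exp (t * hammingInfDist F x)) * #F := by gcongr
    _ ≤ _ := (sum_exp_mul_hammingInfDist_mul_card_le ht hF).trans hpow

theorem stmt5_general (n k : ℕ)
    (F : Finset (Fin n → Bool)) :
    (((univ : Finset (Fin n → Bool)).filter fun x =>
        ∀ y ∈ F, k ≤ hammingDist x y).card : ℝ) / 2 ^ n * ((F.card : ℝ) / 2 ^ n) ≤
      Real.exp (-(k : ℝ) ^ 2 / n) := by
  -- `t = 2k/n` minimises `n t² / 4 - t k`
  have hexp : n * (2 * k / n : ℝ) ^ 2 / 4 - 2 * k / n * k = -(k : ℝ) ^ 2 / n := by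
    rcases n.eq_zero_or_pos with rfl | hn
    · simp
    · field_simp; ring
  rw [div_mul_div_comm, div_le_iff₀ (by positivity), ← mul_pow, ← hexp, mul_comm (Real.exp _)]
  norm_num only
  exact card_filter_le_hammingDist_mul_card_le k F (by positivity)

/-- Talagrand's concentration inequality on the hypercube: for `0 < k ≤ n` and a
nonempty set `F ⊆ {0,1}^n`, with `F_{≥k} = {x : dist(x,y) ≥ k for all y ∈ F}`,
one has `μ(F_{≥k}) · μ(F) ≤ e^{-k²/n}`. -/
theorem stmt5 (n k : ℕ) (hk : 0 < k) (hkn : k ≤ n)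
    (F : Finset (Fin n → Bool)) (hF : F.Nonempty) :
    (((univ : Finset (Fin n → Bool)).filter fun x =>
        ∀ y ∈ F, k ≤ hammingDist x y).card : ℝ) / 2 ^ n * ((F.card : ℝ) / 2 ^ n) ≤
      Real.exp (-(k : ℝ) ^ 2 / n) :=
  stmt5_general n k F
end

section
/- For any two sets A, B ⊆ {0,1}^n of density 1/2, there exists a bijection φ : A → B such that E_{x∈A}[dist(x,φ(x))] ≤ √(2n). -/
open Finset


lemma hd_cons_same {m : ℕ} (b : Bool) (x y : Fin m → Bool) :
    hammingDist (Fin.cons b x : Fin (m+1) → Bool) (Fin.cons b y) = hammingDist x y := by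
  classical
  simp only [hammingDist, Finset.card_filter, Fin.sum_univ_succ, Fin.cons_zero, Fin.cons_succ]
  simp

lemma hd_cons_ne {m : ℕ} {b c : Bool} (h : b ≠ c) (x y : Fin m → Bool) :
    hammingDist (Fin.cons b x : Fin (m+1) → Bool) (Fin.cons c y) = hammingDist x y + 1 := by
  classical
  simp only [hammingDist, Finset.card_filter, Fin.sum_univ_succ, Fin.cons_zero, Fin.cons_succ]
  simp [h]
  omega

lemma expand {α : Type*} [Fintype α] (u v : α → ℝ) :
    ∑ x, ∑ y, (u x - v y)^2
      = (Fintype.card α) * ∑ x, u x ^ 2 + (Fintype.card α) * ∑ y, v y ^ 2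
        - 2 * (∑ x, u x) * (∑ y, v y) := by
  have h : ∀ x, ∑ y, (u x - v y)^2
      = (Fintype.card α : ℝ) * u x ^ 2 - 2 * u x * (∑ y, v y) + ∑ y, v y ^ 2 := by
    intro x
    have h0 : ∀ y, (u x - v y)^2 = u x ^2 - 2 * u x * v y + v y ^2 := fun y => by ring
    rw [Finset.sum_congr rfl (fun y _ => h0 y), Finset.sum_add_distrib, Finset.sum_sub_distrib,
      Finset.sum_const, ← Finset.mul_sum, Finset.card_univ, nsmul_eq_mul]
  have h2 : ∑ x, 2 * u x * (∑ y, v y) = 2 * (∑ x, u x) * (∑ y, v y) := by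
    rw [← Finset.sum_mul, ← Finset.mul_sum]
  rw [Finset.sum_congr rfl (fun x _ => h x), Finset.sum_add_distrib, Finset.sum_sub_distrib,
    h2, ← Finset.mul_sum, Finset.sum_const, Finset.card_univ, nsmul_eq_mul]
  ring

lemma sum_cube_succ {m : ℕ} (F : (Fin (m+1) → Bool) → ℝ) :
    ∑ z, F z = (∑ x : Fin m → Bool, F (Fin.cons false x)) + ∑ x : Fin m → Bool, F (Fin.cons true x) := by
  rw [← Equiv.sum_comp (Fin.consEquiv fun _ => Bool) F, Fintype.sum_prod_type, Fintype.sum_bool]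
  rw [add_comm]
  rfl

lemma poincare : ∀ (m : ℕ) (f : (Fin m → Bool) → ℝ),
    (∀ x y, |f x - f y| ≤ hammingDist x y) →
    ∑ x, ∑ y, (f x - f y)^2 ≤ m * 4 ^ m / 2 := by
  intro m
  induction m with
  | zero =>
    intro f hf
    have h : ∀ x y : Fin 0 → Bool, (f x - f y)^2 = 0 := by
      intro x y
      rw [Subsingleton.elim x y]
      ring
    rw [Finset.sum_congr rfl fun x _ => Finset.sum_congr rfl fun y _ => h x y]
    simp
  | succ m ih =>
    intro f hf
    set g0 : (Fin m → Bool) → ℝ := fun x => f (Fin.cons false x) with hg0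
    set g1 : (Fin m → Bool) → ℝ := fun x => f (Fin.cons true x) with hg1
    have hlip0 : ∀ x y, |g0 x - g0 y| ≤ hammingDist x y := by
      intro x y
      simpa [hd_cons_same] using hf (Fin.cons false x) (Fin.cons false y)
    have hlip1 : ∀ x y, |g1 x - g1 y| ≤ hammingDist x y := by
      intro x y
      simpa [hd_cons_same] using hf (Fin.cons true x) (Fin.cons true y)
    have h0 := ih g0 hlip0
    have h1 := ih g1 hlip1
    have hcard : (Fintype.card (Fin m → Bool) : ℝ) = 2 ^ m := by norm_num
    have hsplit : ∑ x, ∑ y, (f x - f y)^2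
        = (∑ x, ∑ y, (g0 x - g0 y)^2) + (∑ x, ∑ y, (g0 x - g1 y)^2)
          + ((∑ x, ∑ y, (g1 x - g0 y)^2) + (∑ x, ∑ y, (g1 x - g1 y)^2)) := by
      rw [sum_cube_succ (fun z => ∑ y, (f z - f y)^2)]
      rw [Finset.sum_congr rfl fun x _ => sum_cube_succ (fun w => (f (Fin.cons false x) - f w)^2)]
      rw [Finset.sum_congr rfl fun x _ => sum_cube_succ (fun w => (f (Fin.cons true x) - f w)^2)]
      rw [Finset.sum_add_distrib, Finset.sum_add_distrib]
    have habs : |∑ x, g0 x - ∑ x, g1 x| ≤ (2:ℝ)^m := by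
      rw [← Finset.sum_sub_distrib]
      calc |∑ x, (g0 x - g1 x)| ≤ ∑ x, |g0 x - g1 x| := Finset.abs_sum_le_sum_abs _ _
        _ ≤ ∑ _x : Fin m → Bool, (1:ℝ) := by
            apply Finset.sum_le_sum
            intro x _
            simpa [hd_cons_ne (show false ≠ true by simp) x x] using
              hf (Fin.cons false x) (Fin.cons true x)
        _ = (2:ℝ)^m := by simp
    have hS : (∑ x, g0 x - ∑ x, g1 x)^2 ≤ (2:ℝ)^m * (2:ℝ)^m := by
      have h := abs_le.mp habs
      nlinarith [h.1, h.2]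
    have hS' : (∑ x, g0 x)^2 - 2*(∑ x, g0 x)*(∑ x, g1 x) + (∑ x, g1 x)^2
        ≤ (2:ℝ)^m * (2:ℝ)^m := by nlinarith [hS]
    rw [hsplit, expand g0 g0, expand g0 g1, expand g1 g0, expand g1 g1, hcard]
    rw [expand g0 g0, hcard] at h0
    rw [expand g1 g1, hcard] at h1
    have h4 : (4:ℝ)^m = 2^m * 2^m := by rw [← mul_pow]; norm_num
    have h4' : (4:ℝ)^(m+1) = 4 * ((2:ℝ)^m * 2^m) := by rw [pow_succ, h4]; ring
    push_cast
    rw [h4']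
    rw [h4] at h0 h1
    nlinarith [h0, h1, hS']

lemma sqrt4 : Real.sqrt 4 = 2 := by
  rw [show (4:ℝ) = 2^2 by norm_num, Real.sqrt_sq (by norm_num : (0:ℝ) ≤ 2)]

lemma deviation (m : ℕ) (f : (Fin (m+1) → Bool) → ℝ)
    (hf : ∀ x y, |f x - f y| ≤ hammingDist x y)
    (A B : Finset (Fin (m+1) → Bool)) (hA : A.card = 2^m) (hB : B.card = 2^m) :
    ∑ b ∈ B, f b - ∑ a ∈ A, f a ≤ 2^m * Real.sqrt (2*(m+1)) := by
  classical
  have hcard : (Fintype.card (Fin (m+1) → Bool) : ℝ) = 2 ^ (m+1) := by norm_num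
  set M : ℝ := (2:ℝ)^(m+1) with hMdef
  have hM : (0:ℝ) < M := by positivity
  set S : ℝ := ∑ x, f x with hSdef
  set μ : ℝ := S / M with hμdef
  set Q : ℝ := ∑ x, f x ^ 2 with hQdef
  -- variance bound
  have hp := poincare (m+1) f hf
  rw [expand f f, hcard] at hp
  have hvar : ∑ x, (f x - μ)^2 ≤ (m+1) * M / 4 := by
    have h2 : ∑ x, (f x - μ)^2 = Q - S^2 / M := by
      have h0 : ∀ x, (f x - μ)^2 = f x^2 - 2*μ*f x + μ^2 := fun x => by ring
      rw [Finset.sum_congr rfl fun x _ => h0 x, Finset.sum_add_distrib,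
        Finset.sum_sub_distrib, ← Finset.mul_sum, Finset.sum_const, Finset.card_univ,
        nsmul_eq_mul, hcard, ← hSdef, ← hQdef, hμdef]
      field_simp
      ring
    rw [h2]
    have h4 : (4:ℝ)^(m+1) = M * M := by rw [hMdef, ← mul_pow]; norm_num
    rw [h4] at hp
    have key : 2 * M * (Q - S^2/M) ≤ 2 * M * ((m+1) * M / 4) := by
      have e1 : 2 * M * (Q - S^2/M) = M * Q + M * Q - 2 * S * S := by
        field_simp; ring
      have e2 : 2 * M * ((m+1) * M / 4) = (m+1) * (M*M) / 2 := by ring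
      rw [e1, e2]
      push_cast at hp ⊢
      linarith [hp]
    exact le_of_mul_le_mul_left key (by positivity)
  -- per-set deviation
  have claim : ∀ C : Finset (Fin (m+1) → Bool), C.card = 2^m →
      |∑ c ∈ C, (f c - μ)| ≤ 2^m * Real.sqrt ((m+1)/2) := by
    intro C hC
    have h1 : (∑ c ∈ C, (f c - μ))^2 ≤ (C.card : ℝ) * ∑ c ∈ C, (f c - μ)^2 :=
      sq_sum_le_card_mul_sum_sq
    have h2 : ∑ c ∈ C, (f c - μ)^2 ≤ ∑ x, (f x - μ)^2 :=
      Finset.sum_le_sum_of_subset_of_nonneg (Finset.subset_univ C)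
        (fun _ _ _ => sq_nonneg _)
    have hR : ((2:ℝ)^m * Real.sqrt ((m+1)/2))^2 = (2:ℝ)^m * ((m+1) * M / 4) := by
      rw [mul_pow, Real.sq_sqrt (by positivity : (0:ℝ) ≤ ((m:ℝ)+1)/2), hMdef, pow_succ]
      ring
    have h3 : (∑ c ∈ C, (f c - μ))^2 ≤ ((2:ℝ)^m * Real.sqrt ((m+1)/2))^2 := by
      rw [hR]
      calc (∑ c ∈ C, (f c - μ))^2 ≤ (C.card : ℝ) * ∑ x, (f x - μ)^2 := by
            refine h1.trans ?_
            exact mul_le_mul_of_nonneg_left h2 (by positivity)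
        _ ≤ (2:ℝ)^m * ((m+1) * M / 4) := by
            rw [hC]
            push_cast
            refine mul_le_mul_of_nonneg_left hvar (by positivity)
    calc |∑ c ∈ C, (f c - μ)| = Real.sqrt ((∑ c ∈ C, (f c - μ))^2) :=
          (Real.sqrt_sq_eq_abs _).symm
      _ ≤ Real.sqrt (((2:ℝ)^m * Real.sqrt ((m+1)/2))^2) := Real.sqrt_le_sqrt h3
      _ = (2:ℝ)^m * Real.sqrt ((m+1)/2) := Real.sqrt_sq (by positivity)
  -- combine
  have hsplitC : ∀ C : Finset (Fin (m+1) → Bool), C.card = 2^m →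
      ∑ c ∈ C, f c = (∑ c ∈ C, (f c - μ)) + 2^m * μ := by
    intro C hC
    rw [Finset.sum_sub_distrib, Finset.sum_const, hC, nsmul_eq_mul]
    push_cast
    ring
  rw [hsplitC A hA, hsplitC B hB]
  have hBa := (abs_le.mp (claim B hB)).2
  have hAa := (abs_le.mp (claim A hA)).1
  have hsq : Real.sqrt (2*(m+1)) = 2 * Real.sqrt ((m+1)/2) := by
    rw [show (2:ℝ)*((m:ℝ)+1) = 4*(((m:ℝ)+1)/2) by ring,
      Real.sqrt_mul (by norm_num : (0:ℝ) ≤ 4), sqrt4]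
  rw [hsq]
  linarith [hBa, hAa]

/-- For any two sets `A, B ⊆ {0,1}^n` of density `1/2`, there is a bijection
`φ : A → B` with `E_{x ∈ A}[dist(x, φ(x))] ≤ √(2n)`. -/
theorem stmt7 (n : ℕ) (A B : Finset (Fin (n + 1) → Bool))
    (hA : A.card = 2 ^ n) (hB : B.card = 2 ^ n) :
    ∃ φ : (Fin (n + 1) → Bool) → (Fin (n + 1) → Bool),
      Set.BijOn φ (A : Set (Fin (n + 1) → Bool)) (B : Set (Fin (n + 1) → Bool)) ∧
      (∑ a ∈ A, (hammingDist a (φ a) : ℝ)) / A.card ≤ Real.sqrt (2 * (n + 1)) := by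
  classical
  have hA0 : A.Nonempty := Finset.card_pos.mp (by rw [hA]; positivity)
  have hB0 : B.Nonempty := Finset.card_pos.mp (by rw [hB]; positivity)
  -- maximal feasible potential
  obtain ⟨σ⟩ : Nonempty (↥A ≃ ↥B) := ⟨Finset.equivOfCardEq (hA.trans hB.symm)⟩
  have hbdd : ∀ u v : (Fin (n+1) → Bool) → ℤ,
      (∀ a ∈ A, ∀ b ∈ B, u a + v b ≤ (hammingDist a b : ℤ)) →
      (∑ a ∈ A, u a) + (∑ b ∈ B, v b) ≤ (2^n : ℤ) * (n+1) := by
    intro u v hfeas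
    have h1 : ∑ b ∈ B, v b = ∑ a : ↥A, v ↑(σ a) := by
      rw [← Finset.sum_coe_sort B v, ← Equiv.sum_comp σ (fun b : ↥B => v ↑b)]
    have h2 : ∑ a ∈ A, u a = ∑ a : ↥A, u ↑a := (Finset.sum_coe_sort A u).symm
    rw [h1, h2, ← Finset.sum_add_distrib]
    calc ∑ a : ↥A, (u ↑a + v ↑(σ a))
        ≤ ∑ a : ↥A, ((n:ℤ)+1) := by
          apply Finset.sum_le_sum
          intro a _
          have h3 := hfeas ↑a a.2 ↑(σ a) (σ a).2
          have h4 : hammingDist (a : Fin (n+1) → Bool) ↑(σ a) ≤ n+1 := by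
            have := hammingDist_le_card_fintype (x := (a : Fin (n+1) → Bool)) (y := ↑(σ a))
            simpa using this
          have h5 : (hammingDist (a : Fin (n+1) → Bool) ↑(σ a) : ℤ) ≤ (n:ℤ)+1 := by exact_mod_cast h4
          linarith
      _ = (2^n : ℤ) * (n+1) := by
          rw [Finset.sum_const, Finset.card_univ, Fintype.card_coe, hA, nsmul_eq_mul]
          push_cast
          ring
  obtain ⟨c, ⟨u, v, hfeas, hval⟩, hmax⟩ :=
    Int.exists_greatest_of_bdd
      (P := fun z => ∃ u v : (Fin (n+1) → Bool) → ℤ,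
        (∀ a ∈ A, ∀ b ∈ B, u a + v b ≤ (hammingDist a b : ℤ)) ∧
        (∑ a ∈ A, u a) + (∑ b ∈ B, v b) = z)
      ⟨(2^n : ℤ) * (n+1), fun z ⟨u, v, hf, hv⟩ => hv ▸ hbdd u v hf⟩
      ⟨0, fun _ => 0, fun _ => 0, fun a _ b _ => by positivity, by simp⟩
  -- Hall's condition on the tight-edge graph
  set t : ↥A → Finset (Fin (n+1) → Bool) :=
    (fun a => B.filter (fun b => u ↑a + v b = (hammingDist ↑a b : ℤ))) with ht
  have hall : ∀ s : Finset ↥A, s.card ≤ (s.biUnion t).card := by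
    intro s
    by_contra hcon
    push_neg at hcon
    set S : Finset (Fin (n+1) → Bool) := s.image Subtype.val with hSdef
    set T : Finset (Fin (n+1) → Bool) := s.biUnion t with hTdef
    have hScard : S.card = s.card := Finset.card_image_of_injective s Subtype.val_injective
    have hSsub : S ⊆ A := by
      intro x hx
      obtain ⟨a, _, rfl⟩ := Finset.mem_image.mp hx
      exact a.2
    have hTsub : T ⊆ B := by
      intro b hb
      obtain ⟨a, _, hb'⟩ := Finset.mem_biUnion.mp hb
      exact (Finset.mem_filter.mp hb').1
    have hfeas' : ∀ a ∈ A, ∀ b ∈ B,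
        (u a + (if a ∈ S then 1 else 0)) + (v b - (if b ∈ T then 1 else 0))
          ≤ (hammingDist a b : ℤ) := by
      intro a ha b hb
      have hle := hfeas a ha b hb
      by_cases haS : a ∈ S
      · by_cases hbT : b ∈ T
        · rw [if_pos haS, if_pos hbT]; omega
        · obtain ⟨a0, ha0, haa⟩ := Finset.mem_image.mp haS
          have hbt : b ∉ t a0 := fun h => hbT (Finset.mem_biUnion.mpr ⟨a0, ha0, h⟩)
          have hne : u a + v b ≠ (hammingDist a b : ℤ) := by
            intro h
            exact hbt (Finset.mem_filter.mpr ⟨hb, by rw [haa]; exact h⟩)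
          rw [if_pos haS, if_neg hbT]
          omega
      · rw [if_neg haS]
        split <;> omega
    have hsum1 : ∑ a ∈ A, (u a + (if a ∈ S then 1 else 0)) = (∑ a ∈ A, u a) + s.card := by
      rw [Finset.sum_add_distrib, Finset.sum_boole, Finset.filter_mem_eq_inter,
        Finset.inter_eq_right.mpr hSsub, hScard]
    have hsum2 : ∑ b ∈ B, (v b - (if b ∈ T then 1 else 0)) = (∑ b ∈ B, v b) - T.card := by
      rw [Finset.sum_sub_distrib, Finset.sum_boole, Finset.filter_mem_eq_inter,
        Finset.inter_eq_right.mpr hTsub]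
    have hex : ∃ u' v' : (Fin (n+1) → Bool) → ℤ,
        (∀ a ∈ A, ∀ b ∈ B, u' a + v' b ≤ (hammingDist a b : ℤ)) ∧
        (∑ a ∈ A, u' a) + (∑ b ∈ B, v' b) = ((∑ a ∈ A, u a) + s.card)
          + ((∑ b ∈ B, v b) - T.card) := by
      refine ⟨fun a => u a + (if a ∈ S then 1 else 0),
        fun b => v b - (if b ∈ T then 1 else 0), hfeas', ?_⟩
      show (∑ a ∈ A, (u a + (if a ∈ S then 1 else 0)))
          + (∑ b ∈ B, (v b - (if b ∈ T then 1 else 0))) = _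
      rw [hsum1, hsum2]
    have hmax' := hmax _ hex
    have : (T.card : ℤ) < s.card := by exact_mod_cast hcon
    omega
  obtain ⟨F, hFinj, hFmem⟩ := (Finset.all_card_le_biUnion_card_iff_exists_injective t).mp hall
  have hFB : ∀ a : ↥A, F a ∈ B := fun a => (Finset.mem_filter.mp (hFmem a)).1
  have hFtight : ∀ a : ↥A, u ↑a + v (F a) = (hammingDist (↑a : Fin (n+1) → Bool) (F a) : ℤ) :=
    fun a => (Finset.mem_filter.mp (hFmem a)).2
  have hBeq : A.attach.image F = B := by
    apply Finset.eq_of_subset_of_card_le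
    · intro b hb
      obtain ⟨a, _, rfl⟩ := Finset.mem_image.mp hb
      exact hFB a
    · rw [Finset.card_image_of_injective _ hFinj, Finset.card_attach, hA, hB]
  set φ : (Fin (n+1) → Bool) → (Fin (n+1) → Bool) := fun x => if h : x ∈ A then F ⟨x, h⟩ else x with hφ
  have hφA : ∀ (x : Fin (n+1) → Bool) (h : x ∈ A), φ x = F ⟨x, h⟩ := by
    intro x h
    simp only [hφ, dif_pos h]
  refine ⟨φ, ⟨?_, ?_, ?_⟩, ?_⟩
  · intro x hx
    rw [Finset.mem_coe] at hx
    show φ x ∈ (B : Set (Fin (n+1) → Bool))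
    rw [hφA x hx]
    exact Finset.mem_coe.mpr (hFB ⟨x, hx⟩)
  · intro x hx y hy hxy
    rw [Finset.mem_coe] at hx hy
    rw [hφA x hx, hφA y hy] at hxy
    exact congrArg Subtype.val (hFinj hxy)
  · intro b hb
    rw [Finset.mem_coe, ← hBeq] at hb
    obtain ⟨a, _, rfl⟩ := Finset.mem_image.mp hb
    refine ⟨↑a, Finset.mem_coe.mpr a.2, ?_⟩
    rw [hφA ↑a a.2]
  -- cost computation
  have hcost : ∑ a ∈ A, (hammingDist a (φ a) : ℤ) = c := by
    rw [← Finset.sum_attach A (fun a => (hammingDist a (φ a) : ℤ))]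
    have hterm : ∀ a : ↥A, (hammingDist (↑a : Fin (n+1) → Bool) (φ ↑a) : ℤ) = u ↑a + v (F a) := by
      intro a
      rw [hφA ↑a a.2]
      exact (hFtight a).symm
    rw [Finset.sum_congr rfl (fun a _ => hterm a), Finset.sum_add_distrib]
    have h1 : ∑ a ∈ A.attach, u ↑a = ∑ a ∈ A, u a := Finset.sum_attach A u
    have h2 : ∑ a ∈ A.attach, v (F a) = ∑ b ∈ B, v b := by
      rw [← hBeq, Finset.sum_image (fun a _ a' _ h => hFinj h)]
    rw [h1, h2, hval]
  -- dual bound via the deviation lemma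
  have hub : (c : ℝ) ≤ 2^n * Real.sqrt (2*(n+1)) := by
    set g : (Fin (n+1) → Bool) → ℤ := fun x => A.inf' hA0 (fun a => (hammingDist x a : ℤ) - u a) with hg
    have hglipZ : ∀ x y : Fin (n+1) → Bool, g x ≤ g y + hammingDist x y := by
      intro x y
      obtain ⟨a, haA, hay⟩ := Finset.exists_mem_eq_inf' hA0
        (fun a => (hammingDist y a : ℤ) - u a)
      have h1 : g x ≤ (hammingDist x a : ℤ) - u a :=
        Finset.inf'_le _ haA
      have h2' : (hammingDist x a : ℤ) ≤ (hammingDist x y : ℤ) + hammingDist y a := by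
        exact_mod_cast hammingDist_triangle x y a
      have h3 : g y = (hammingDist y a : ℤ) - u a := hay
      omega
    have hglip : ∀ x y : Fin (n+1) → Bool, |(g x : ℝ) - (g y : ℝ)| ≤ hammingDist x y := by
      intro x y
      have h1 : |g x - g y| ≤ (hammingDist x y : ℤ) := by
        rw [abs_sub_le_iff]
        constructor
        · have := hglipZ x y; omega
        · have := hglipZ y x
          rw [hammingDist_comm y x] at this
          omega
      exact_mod_cast h1
    have hga : ∀ a ∈ A, u a ≤ - g a := by
      intro a ha
      have h1 : g a ≤ (hammingDist a a : ℤ) - u a := Finset.inf'_le _ ha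
      rw [hammingDist_self] at h1
      omega
    have hgb : ∀ b ∈ B, v b ≤ g b := by
      intro b hb
      apply Finset.le_inf'
      intro a ha
      have h1 := hfeas a ha b hb
      rw [hammingDist_comm b a]
      omega
    have hd := deviation n (fun x => (g x : ℝ)) hglip A B hA hB
    have hc : (c : ℝ) = (∑ a ∈ A, (u a : ℝ)) + ∑ b ∈ B, (v b : ℝ) := by
      rw [← hval]; push_cast; ring
    rw [hc]
    have hs1 : ∑ a ∈ A, (u a : ℝ) ≤ ∑ a ∈ A, (-(g a : ℝ)) := by
      apply Finset.sum_le_sum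
      intro a ha
      exact_mod_cast hga a ha
    have hs2 : ∑ b ∈ B, (v b : ℝ) ≤ ∑ b ∈ B, (g b : ℝ) := by
      apply Finset.sum_le_sum
      intro b hb
      exact_mod_cast hgb b hb
    have hs3 : ∑ a ∈ A, (-(g a : ℝ)) = - ∑ a ∈ A, (g a : ℝ) := by
      rw [Finset.sum_neg_distrib]
    calc (∑ a ∈ A, (u a : ℝ)) + ∑ b ∈ B, (v b : ℝ)
        ≤ (- ∑ a ∈ A, (g a : ℝ)) + ∑ b ∈ B, (g b : ℝ) := by
          rw [← hs3]; exact add_le_add hs1 hs2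
      _ = (∑ b ∈ B, (g b : ℝ)) - ∑ a ∈ A, (g a : ℝ) := by ring
      _ ≤ 2^n * Real.sqrt (2*(n+1)) := by
          exact_mod_cast hd
  -- conclude
  have hsum : (∑ a ∈ A, (hammingDist a (φ a) : ℝ)) = (c : ℝ) := by
    rw [← hcost]
    push_cast
    ring
  rw [hsum, hA]
  rw [div_le_iff₀ (by positivity)]
  calc (c:ℝ) ≤ 2^n * Real.sqrt (2*(n+1)) := hub
    _ = Real.sqrt (2*(n+1)) * (2^n : ℕ) := by push_cast; ring
end

section
/- For the map f_k : {0,1}^{3^k} → A_k fixing A_k pointwise and mapping Z_k bijectively onto A_k as constructed recursively from f_1, one has E_{x uniform with RecMaj_k(x)=0}[dist(x, f_k(x))] = 1.5^k. -/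
open Finset

/-- Majority of three bits. -/
def maj3 (a b c : Bool) : Bool := (a && b) || (a && c) || (b && c)

/-- Recursive majority of 3's on `3^k` bits. -/
def recMaj : ∀ k : ℕ, (Fin (3 ^ k) → Bool) → Bool
  | 0, x => x ⟨0, by norm_num⟩
  | k + 1, x =>
    let b : Fin 3 → Bool := fun r =>
      recMaj k (fun i => x ⟨r * 3 ^ k + i, by
        have hi := i.isLt
        have hr : (r : ℕ) ≤ 2 := Nat.lt_succ_iff.mp r.isLt
        have hm : (r : ℕ) * 3 ^ k ≤ 2 * 3 ^ k := Nat.mul_le_mul_right _ hr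
        have h3 : (3 : ℕ) ^ (k + 1) = 3 ^ k * 3 := pow_succ 3 k
        omega⟩)
    maj3 (b 0) (b 1) (b 2)

/-- The `r`-th third of a string of length `3^{k+1}`. -/
def block (k : ℕ) (r : Fin 3) (x : Fin (3 ^ (k + 1)) → Bool) : Fin (3 ^ k) → Bool :=
  fun i => x ⟨r * 3 ^ k + i, by
    have hi := i.isLt
    have hr : (r : ℕ) ≤ 2 := Nat.lt_succ_iff.mp r.isLt
    have hm : (r : ℕ) * 3 ^ k ≤ 2 * 3 ^ k := Nat.mul_le_mul_right _ hr
    have h3 : (3 : ℕ) ^ (k + 1) = 3 ^ k * 3 := pow_succ 3 k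
    omega⟩

/-- Concatenation of three strings of length `3^k` into one of length `3^{k+1}`. -/
def glue (k : ℕ) (g : Fin 3 → Fin (3 ^ k) → Bool) : Fin (3 ^ (k + 1)) → Bool :=
  fun j =>
    g ⟨(j : ℕ) / 3 ^ k, by
        have hj := j.isLt
        have h3 : (3 : ℕ) ^ (k + 1) = 3 ^ k * 3 := pow_succ 3 k
        have hpos : 0 < (3 : ℕ) ^ k := pow_pos (by norm_num) k
        rw [Nat.div_lt_iff_lt_mul hpos]
        omega⟩
      ⟨(j : ℕ) % 3 ^ k, Nat.mod_lt _ (pow_pos (by norm_num) k)⟩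

/-- The base map `f_1` on three bits:
`000 ↦ 110`, `100 ↦ 101`, `010 ↦ 011`, `001 ↦ 111`, identity on `A_1`. -/
def f1 (y : Fin 3 → Bool) : Fin 3 → Bool :=
  match y 0, y 1, y 2 with
  | false, false, false => ![true, true, false]
  | true, false, false => ![true, false, true]
  | false, true, false => ![false, true, true]
  | false, false, true => ![true, true, true]
  | _, _, _ => y

/-- The recursively defined retraction `f_k : {0,1}^{3^k} → A_k`: the identity on `A_k`;
on each level, `f_{k-1}` is applied to exactly those thirds `x^{(r)}` where the
majority pattern `y` differs from `w = f_1(y)`. -/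
def fmap : ∀ k : ℕ, (Fin (3 ^ k) → Bool) → (Fin (3 ^ k) → Bool)
  | 0, x => if x ⟨0, by norm_num⟩ then x else fun _ => true
  | k + 1, x =>
    let y : Fin 3 → Bool := fun r => recMaj k (block k r x)
    let w : Fin 3 → Bool := f1 y
    glue k (fun r => if w r = y r then block k r x else fmap k (block k r x))

-- basic structural lemmas
lemma block_glue (k : ℕ) (g : Fin 3 → Fin (3 ^ k) → Bool) (r : Fin 3) :
    block k r (glue k g) = g r := by
  funext i
  have hpos : 0 < (3:ℕ) ^ k := pow_pos (by norm_num) k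
  have hd : ((r : ℕ) * 3 ^ k + (i : ℕ)) / 3 ^ k = r := by
    rw [mul_comm, Nat.mul_add_div hpos, Nat.div_eq_of_lt i.isLt]; omega
  have hm : ((r : ℕ) * 3 ^ k + (i : ℕ)) % 3 ^ k = i := by
    rw [mul_comm, Nat.mul_add_mod, Nat.mod_eq_of_lt i.isLt]
  show glue k g _ = _
  unfold glue
  congr 1 <;> [skip; exact Fin.ext hm] <;> exact Fin.ext hd

lemma glue_block (k : ℕ) (x : Fin (3 ^ (k + 1)) → Bool) :
    glue k (fun r => block k r x) = x := by
  funext j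
  show x _ = x j
  congr 1
  refine Fin.ext ?_
  show (j : ℕ) / 3 ^ k * 3 ^ k + (j : ℕ) % 3 ^ k = j
  rw [mul_comm]; exact Nat.div_add_mod _ _

lemma recMaj_succ (k : ℕ) (x : Fin (3 ^ (k + 1)) → Bool) :
    recMaj (k + 1) x
      = maj3 (recMaj k (block k 0 x)) (recMaj k (block k 1 x)) (recMaj k (block k 2 x)) := rfl

lemma fmap_succ (k : ℕ) (x : Fin (3 ^ (k + 1)) → Bool) :
    fmap (k + 1) x = glue k (fun r =>
      if f1 (fun s => recMaj k (block k s x)) r = recMaj k (block k r x)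
      then block k r x else fmap k (block k r x)) := rfl

def emb (k : ℕ) (p : Fin 3 × Fin (3 ^ k)) : Fin (3 ^ (k + 1)) :=
  ⟨p.1 * 3 ^ k + p.2, by
    have hi := p.2.isLt
    have hr : (p.1 : ℕ) ≤ 2 := Nat.lt_succ_iff.mp p.1.isLt
    have hm : (p.1 : ℕ) * 3 ^ k ≤ 2 * 3 ^ k := Nat.mul_le_mul_right _ hr
    have h3 : (3 : ℕ) ^ (k + 1) = 3 ^ k * 3 := pow_succ 3 k
    omega⟩

lemma emb_bijective (k : ℕ) : Function.Bijective (emb k) := by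
  have hpos : 0 < (3:ℕ) ^ k := pow_pos (by norm_num) k
  constructor
  · rintro ⟨r, i⟩ ⟨r', i'⟩ h
    have h' : (r : ℕ) * 3 ^ k + (i : ℕ) = (r' : ℕ) * 3 ^ k + (i' : ℕ) := congrArg Fin.val h
    have hd : ((r : ℕ) * 3 ^ k + (i : ℕ)) / 3 ^ k = r := by
      rw [mul_comm, Nat.mul_add_div hpos, Nat.div_eq_of_lt i.isLt]; omega
    have hd' : ((r' : ℕ) * 3 ^ k + (i' : ℕ)) / 3 ^ k = r' := by
      rw [mul_comm, Nat.mul_add_div hpos, Nat.div_eq_of_lt i'.isLt]; omega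
    have : (r : ℕ) = r' := by rw [← hd, ← hd', h']
    have hi : (i : ℕ) = i' := by rw [this] at h'; omega
    simp [Prod.ext_iff, Fin.ext_iff, this, hi]
  · intro j
    refine ⟨(⟨(j : ℕ) / 3 ^ k, by
        have hj := j.isLt
        have h3 : (3 : ℕ) ^ (k + 1) = 3 ^ k * 3 := pow_succ 3 k
        rw [Nat.div_lt_iff_lt_mul hpos]; omega⟩,
      ⟨(j : ℕ) % 3 ^ k, Nat.mod_lt _ hpos⟩), ?_⟩
    refine Fin.ext ?_
    show (j : ℕ) / 3 ^ k * 3 ^ k + (j : ℕ) % 3 ^ k = j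
    rw [mul_comm]; exact Nat.div_add_mod _ _

lemma glue_emb (k : ℕ) (g : Fin 3 → Fin (3 ^ k) → Bool) (r : Fin 3) (i : Fin (3 ^ k)) :
    glue k g (emb k (r, i)) = g r i := congrFun (block_glue k g r) i

lemma hammingDist_glue (k : ℕ) (g g' : Fin 3 → Fin (3 ^ k) → Bool) :
    hammingDist (glue k g) (glue k g') = ∑ r : Fin 3, hammingDist (g r) (g' r) := by
  classical
  simp only [hammingDist, Finset.card_filter]
  rw [← Fintype.sum_bijective (emb k) (emb_bijective k)
    (fun p => if glue k g (emb k p) ≠ glue k g' (emb k p) then 1 else 0)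
    (fun j => if glue k g j ≠ glue k g' j then 1 else 0) (fun p => rfl)]
  rw [Fintype.sum_prod_type]
  refine Finset.sum_congr rfl fun r _ => Finset.sum_congr rfl fun i _ => ?_
  rw [glue_emb, glue_emb]

lemma recMaj_not (k : ℕ) (x : Fin (3 ^ k) → Bool) :
    recMaj k (fun i => ! x i) = ! recMaj k x := by
  induction k with
  | zero => rfl
  | succ k ih =>
    have hb : ∀ r, block k r (fun i => ! x i) = fun i => ! block k r x i := fun r => rfl
    rw [recMaj_succ, recMaj_succ, hb, hb, hb, ih, ih, ih]
    cases recMaj k (block k 0 x) <;> cases recMaj k (block k 1 x) <;>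
      cases recMaj k (block k 2 x) <;> rfl

lemma card_Z (k : ℕ) :
    2 * ((univ : Finset (Fin (3 ^ k) → Bool)).filter (fun x => recMaj k x = false)).card
      = 2 ^ 3 ^ k := by
  classical
  have hb : ((univ : Finset (Fin (3 ^ k) → Bool)).filter (fun x => recMaj k x = false)).card
      = ((univ : Finset (Fin (3 ^ k) → Bool)).filter (fun x => ¬ (recMaj k x = false))).card := by
    refine Finset.card_bij' (fun x _ => fun i => ! x i) (fun x _ => fun i => ! x i) ?_ ?_ ?_ ?_
    · intro x hx
      simp only [Finset.mem_filter, Finset.mem_univ, true_and] at hx ⊢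
      rw [recMaj_not, hx]; simp
    · intro x hx
      simp only [Finset.mem_filter, Finset.mem_univ, true_and] at hx ⊢
      rw [recMaj_not]
      cases h : recMaj k x
      · exact absurd h hx
      · rfl
    · intro x _; funext i; simp
    · intro x _; funext i; simp
  have hsplit := Finset.card_filter_add_card_filter_not
    (s := (univ : Finset (Fin (3 ^ k) → Bool))) (p := fun x => recMaj k x = false)
  have huniv : (univ : Finset (Fin (3 ^ k) → Bool)).card = 2 ^ 3 ^ k := by
    simp [Finset.card_univ]
  omega

lemma sum_piFinset_apply {V : Type*} [DecidableEq V] (Sb : Fin 3 → Finset V)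
    (r : Fin 3) (h : V → ℕ) :
    ∑ g ∈ Fintype.piFinset Sb, h (g r)
      = (∑ v ∈ Sb r, h v) * ∏ i ∈ univ.erase r, (Sb i).card := by
  calc ∑ g ∈ Fintype.piFinset Sb, h (g r)
      = ∑ g ∈ Fintype.piFinset Sb, ∏ i, (if i = r then h (g i) else 1) := by
        refine Finset.sum_congr rfl fun g _ => ?_
        rw [Fintype.prod_ite_eq']
    _ = ∏ i, ∑ v ∈ Sb i, (if i = r then h v else 1) := (Finset.prod_univ_sum Sb (fun i v => if i = r then h v else 1)).symm
    _ = (∑ v ∈ Sb r, h v) * ∏ i ∈ univ.erase r, (Sb i).card := by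
        rw [← Finset.mul_prod_erase univ _ (Finset.mem_univ r)]
        congr 1
        · simp
        · refine Finset.prod_congr rfl fun i hi => ?_
          simp [(Finset.mem_erase.mp hi).1]

lemma card_true_eq (k : ℕ) :
    ((univ : Finset (Fin (3 ^ k) → Bool)).filter (fun x => recMaj k x = true)).card
      = ((univ : Finset (Fin (3 ^ k) → Bool)).filter (fun x => recMaj k x = false)).card := by
  classical
  refine Finset.card_bij' (fun x _ => fun i => ! x i) (fun x _ => fun i => ! x i) ?_ ?_ ?_ ?_
  · intro x hx
    simp only [Finset.mem_filter, Finset.mem_univ, true_and] at hx ⊢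
    rw [recMaj_not, hx]; rfl
  · intro x hx
    simp only [Finset.mem_filter, Finset.mem_univ, true_and] at hx ⊢
    rw [recMaj_not, hx]; rfl
  · intro x _; funext i; simp
  · intro x _; funext i; simp

lemma glue_bijective (k : ℕ) : Function.Bijective (glue k) := by
  constructor
  · intro g g' h
    funext r
    rw [← block_glue k g r, ← block_glue k g' r, h]
  · intro x
    exact ⟨fun r => block k r x, glue_block k x⟩

lemma flipped_false : ∀ (b : Fin 3 → Bool) (r : Fin 3),
    maj3 (b 0) (b 1) (b 2) = false → ¬ (f1 b r = b r) → b r = false := by decide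

lemma count_six : (∑ b : Fin 3 → Bool, ∑ r : Fin 3,
    (if maj3 (b 0) (b 1) (b 2) = false ∧ ¬ (f1 b r = b r) then 1 else 0)) = 6 := by decide

lemma keyS : ∀ k : ℕ,
    (∑ x ∈ (univ : Finset (Fin (3 ^ k) → Bool)).filter (fun x => recMaj k x = false),
      hammingDist x (fmap k x)) * 2 ^ (k + 1) = 3 ^ k * 2 ^ 3 ^ k := by
  intro k
  induction k with
  | zero => decide
  | succ k ih =>
    classical
    set V := (Fin (3 ^ k) → Bool)
    set m : V → Bool := recMaj k with hm
    set d : V → ℕ := fun v => hammingDist v (fmap k v) with hd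
    set P : Bool → Finset V := fun c => (univ : Finset V).filter (fun v => m v = c) with hP
    set N : ℕ := (P false).card with hN
    set S : ℕ := ∑ v ∈ P false, d v with hSdef
    -- step 1 : reindex by glue
    have hstep1 :
        (∑ x ∈ (univ : Finset (Fin (3 ^ (k+1)) → Bool)).filter
            (fun x => recMaj (k+1) x = false), hammingDist x (fmap (k+1) x))
        = ∑ g : Fin 3 → V,
            (if maj3 (m (g 0)) (m (g 1)) (m (g 2)) = false
              then ∑ r : Fin 3, (if f1 (fun s => m (g s)) r = m (g r) then 0 else d (g r))
              else 0) := by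
      rw [Finset.sum_filter]
      refine (Fintype.sum_bijective (glue k) (glue_bijective k) _ _ fun g => ?_).symm
      have hb : ∀ r, block k r (glue k g) = g r := block_glue k g
      have hcond : recMaj (k+1) (glue k g) = maj3 (m (g 0)) (m (g 1)) (m (g 2)) := by
        rw [recMaj_succ, hb, hb, hb]
      have hdist : hammingDist (glue k g) (fmap (k+1) (glue k g))
          = ∑ r : Fin 3, (if f1 (fun s => m (g s)) r = m (g r) then 0 else d (g r)) := by
        rw [fmap_succ]
        simp only [hb]
        rw [hammingDist_glue]
        refine Finset.sum_congr rfl fun r _ => ?_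
        split
        · exact hammingDist_self _
        · rfl
      rw [hcond, hdist]
    -- step 2 : fiberwise over the majority pattern
    have hstep2 :
        (∑ g : Fin 3 → V,
            (if maj3 (m (g 0)) (m (g 1)) (m (g 2)) = false
              then ∑ r : Fin 3, (if f1 (fun s => m (g s)) r = m (g r) then 0 else d (g r))
              else 0))
        = ∑ b : Fin 3 → Bool, ∑ g ∈ Fintype.piFinset (fun r => P (b r)),
            (if maj3 (b 0) (b 1) (b 2) = false
              then ∑ r : Fin 3, (if f1 b r = b r then 0 else d (g r))
              else 0) := by
      rw [← Finset.sum_fiberwise univ (fun g : Fin 3 → V => (fun r => m (g r)))]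
      refine Finset.sum_congr rfl fun b _ => ?_
      have hset : (univ : Finset (Fin 3 → V)).filter (fun g => (fun r => m (g r)) = b)
          = Fintype.piFinset (fun r => P (b r)) := by
        ext g
        simp [Fintype.mem_piFinset, funext_iff, hP]
      rw [hset]
      refine Finset.sum_congr rfl fun g hg => ?_
      have hgb : ∀ r, m (g r) = b r := by
        intro r
        have := Fintype.mem_piFinset.mp hg r
        simpa [hP] using this
      have hfe : (fun s => m (g s)) = b := funext hgb
      simp only [hfe, hgb]
    -- step 3 : evaluate inner sums
    have hNc : ∀ c, (P c).card = N := by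
      intro c; cases c
      · rfl
      · exact card_true_eq k
    have hb_eval : ∀ b : Fin 3 → Bool,
        (∑ g ∈ Fintype.piFinset (fun r => P (b r)),
            (if maj3 (b 0) (b 1) (b 2) = false
              then ∑ r : Fin 3, (if f1 b r = b r then 0 else d (g r))
              else 0))
        = (∑ r : Fin 3, (if maj3 (b 0) (b 1) (b 2) = false ∧ ¬ (f1 b r = b r) then 1 else 0))
            * (S * N ^ 2) := by
      intro b
      by_cases hmaj : maj3 (b 0) (b 1) (b 2) = false
      · simp only [hmaj, if_true, true_and]
        rw [Finset.sum_comm, Finset.sum_mul]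
        refine Finset.sum_congr rfl fun r _ => ?_
        rw [show (fun g : Fin 3 → V => if f1 b r = b r then 0 else d (g r))
              = fun g => (fun v => if f1 b r = b r then 0 else d v) (g r) from rfl]
        rw [sum_piFinset_apply (fun r => P (b r)) r (fun v => if f1 b r = b r then 0 else d v)]
        have hprod : (∏ i ∈ (univ : Finset (Fin 3)).erase r, (P (b i)).card) = N ^ 2 := by
          rw [Finset.prod_congr rfl (fun i _ => hNc (b i)), Finset.prod_const,
            Finset.card_erase_of_mem (Finset.mem_univ r)]
          simp
        rw [hprod]
        by_cases hf : f1 b r = b r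
        · simp [hf]
        · have hbr : b r = false := flipped_false b r hmaj hf
          simp only [if_neg hf]
          rw [hbr, ← hSdef]
          have hf' : ¬ f1 b r = false := by rw [← hbr]; exact hf
          rw [if_pos hf']
          ring
      · simp [hmaj]
    have htot : (∑ x ∈ (univ : Finset (Fin (3 ^ (k+1)) → Bool)).filter
          (fun x => recMaj (k+1) x = false), hammingDist x (fmap (k+1) x))
        = 6 * (S * N ^ 2) := by
      rw [hstep1, hstep2, Finset.sum_congr rfl fun b _ => hb_eval b, ← Finset.sum_mul,
        count_six]
    rw [htot]
    have hcard : 2 * N = 2 ^ 3 ^ k := card_Z k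
    have hexp : (2:ℕ) ^ 3 ^ (k+1) = (2 ^ 3 ^ k) ^ 3 := by
      rw [pow_succ 3 k, pow_mul]
    rw [hexp]
    zify at ih hcard ⊢
    linear_combination (12 * (N:ℤ) ^ 2) * ih
      + ((3:ℤ) ^ (k+1) * 2 ^ 3 ^ k * (2 * (N:ℤ) + 2 ^ 3 ^ k)) * hcard

/-- For the recursively constructed retraction `f_k`, the expected distance
`E[dist(x, f_k(x))]` over uniform `x` with `RecMaj_k(x) = 0` equals `1.5^k`. -/
theorem stmt14 (k : ℕ) (hk : 0 < k) :
    (∑ x ∈ (univ : Finset (Fin (3 ^ k) → Bool)).filter (fun x => recMaj k x = false),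
        (hammingDist x (fmap k x) : ℝ)) /
      (((univ : Finset (Fin (3 ^ k) → Bool)).filter
        (fun x => recMaj k x = false)).card : ℝ) = 1.5 ^ k := by
  have hkey := keyS k
  have hcard := card_Z k
  set S : ℕ := ∑ x ∈ (univ : Finset (Fin (3 ^ k) → Bool)).filter
      (fun x => recMaj k x = false), hammingDist x (fmap k x) with hS
  set N : ℕ := ((univ : Finset (Fin (3 ^ k) → Bool)).filter
      (fun x => recMaj k x = false)).card with hNd
  have h2p : 0 < 2 ^ 3 ^ k := pow_pos (by norm_num) _
  have hN0 : 0 < N := by omega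
  have hkeyR : (S : ℝ) * 2 ^ (k + 1) = 3 ^ k * 2 ^ 3 ^ k := by exact_mod_cast hkey
  have hcardR : 2 * (N : ℝ) = 2 ^ 3 ^ k := by exact_mod_cast hcard
  have hcast : (∑ x ∈ (univ : Finset (Fin (3 ^ k) → Bool)).filter
      (fun x => recMaj k x = false), (hammingDist x (fmap k x) : ℝ)) = (S : ℝ) := by
    rw [hS]; push_cast; rfl
  rw [hcast]
  have h15 : (1.5 : ℝ) = 3 / 2 := by norm_num
  rw [h15, div_pow]
  have hNne : (N : ℝ) ≠ 0 := Nat.cast_ne_zero.mpr hN0.ne'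
  have h2ne : (2 : ℝ) ^ k ≠ 0 := by positivity
  field_simp
  linear_combination (1 / 2) * hkeyR - ((3 : ℝ) ^ k / 2) * hcardR
end

section
/- Let Tribes_{w,s} : {0,1}^{sw} → {0,1} be the OR of s disjoint ANDs of width w, with s the largest integer such that 1 − (1 − 2^{-w})^s ≤ 1/2, and n = sw. Let μ⁰ and μ¹ be the uniform distributions on Tribes^{-1}(0) and Tribes^{-1}(1) respectively. Then W₁(μ⁰, μ¹) = O(log n); concretely, there is a coupling transporting μ⁰ to μ¹ with expected Hamming distance at most E[L]·w where L is Bin(s, 2^{-w}) conditioned on being positive, and E[L]·w = O(log n). -/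
open Finset
open scoped Classical

/-- The ℓ¹-Wasserstein distance between two mass functions on a finite type. -/
noncomputable def W1 {X : Type*} [Fintype X] (d : X → X → ℝ) (p q : X → ℝ) : ℝ :=
  sInf {c : ℝ | ∃ Q : X → X → ℝ,
    (∀ a b, 0 ≤ Q a b) ∧
    (∀ a, ∑ b, Q a b = p a) ∧
    (∀ b, ∑ a, Q a b = q b) ∧
    c = ∑ a, ∑ b, d a b * Q a b}

/-- The tribes function on `s` tribes of width `w`: the OR of `s` disjoint ANDs. -/
def tribes (s w : ℕ) (x : Fin s × Fin w → Bool) : Prop :=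
  ∃ t : Fin s, ∀ j : Fin w, x (t, j) = true

/-- The uniform mass function on `{x : Tribes(x) = b}`. -/
noncomputable def tribesUnif (s w : ℕ) (b : Prop) : (Fin s × Fin w → Bool) → ℝ :=
  fun x => if tribes s w x ↔ b then
    (1 : ℝ) / ((univ : Finset (Fin s × Fin w → Bool)).filter fun z => tribes s w z ↔ b).card
  else 0

/-!
Start from `x ~ μ⁰`, draw a nonempty set `T` of tribes with the law that the set of all-ones
tribes has under `μ¹`, and set the tribes of `T` to all-ones. Since `x` has no all-ones tribe, `T`
is recovered from the result `y` as its set of all-ones tribes, and for each `y` the admissible `x`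
are the `(2^w - 1)^{#T}` fillings of the tribes of `T`; this makes `y` uniform on `tribes⁻¹(1)`.
Only the `w · #T` bits of the filled tribes move, so the cost is `w · E[L]`. The balance condition
on `s` gives `s 2^{-w} ≤ log 2`, `1 - (1 - 2^{-w})^s ≥ 1/3` and `2^w ≤ s w`, whence
`w · E[L] ≤ 3 w log 2 ≤ 3 log (s w)`.
-/

lemma W1_le_of_coupling {X : Type*} [Fintype X] {d : X → X → ℝ} (hd : ∀ a b, 0 ≤ d a b)
    {p q : X → ℝ} (Q : X → X → ℝ) (hQ : ∀ a b, 0 ≤ Q a b) (hp : ∀ a, ∑ b, Q a b = p a)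
    (hq : ∀ b, ∑ a, Q a b = q b) : W1 d p q ≤ ∑ a, ∑ b, d a b * Q a b := by
  refine csInf_le ⟨0, ?_⟩ ⟨Q, hQ, hp, hq, rfl⟩
  rintro _ ⟨Q', hQ', -, -, rfl⟩
  exact sum_nonneg fun a _ => sum_nonneg fun b _ => mul_nonneg (hd a b) (hQ' a b)

lemma mul_le_log_two_of_half_le_one_sub_pow {p : ℝ} {n : ℕ} (hp : p ≤ 1)
    (h : 1 / 2 ≤ (1 - p) ^ n) : n * p ≤ Real.log 2 := by
  have hexp : (1 - p) ^ n ≤ Real.exp (-(n * p)) := by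
    rw [neg_mul_eq_mul_neg, Real.exp_nat_mul]
    exact pow_le_pow_left₀ (by linarith) (by linarith [Real.add_one_le_exp (-p)]) n
  have hlog := Real.log_le_log (by norm_num) (h.trans hexp)
  rw [Real.log_exp, one_div, Real.log_inv] at hlog
  linarith

lemma lt_two_mul_of_one_sub_inv_pow_lt_half {M : ℝ} {n : ℕ} (hM : 1 ≤ M)
    (h : (1 - M⁻¹) ^ n < 1 / 2) : M < 2 * n := by
  have hbern := one_add_mul_le_pow (a := -M⁻¹) (by linarith [inv_le_one_of_one_le₀ hM]) n
  rw [← sub_eq_add_neg, mul_neg, ← sub_eq_add_neg] at hbern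
  have hlt : 1 < 2 * n * M⁻¹ := by linarith
  rwa [lt_mul_inv_iff₀ (by linarith), one_mul] at hlt

namespace Tribes

variable {s w : ℕ}

def allOnesTribes (y : Fin s × Fin w → Bool) : Finset (Fin s) :=
  univ.filter fun i => ∀ j, y (i, j) = true

def fillTribes (T : Finset (Fin s)) (x : Fin s × Fin w → Bool) : Fin s × Fin w → Bool :=
  fun ij => if ij.1 ∈ T then true else x ij

def IsTribesFill (x y : Fin s × Fin w → Bool) : Prop :=
  ¬ tribes s w x ∧ tribes s w y ∧ fillTribes (allOnesTribes y) x = y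

def notAllOnes (w : ℕ) : Finset (Fin w → Bool) :=
  univ.erase fun _ => true

lemma mem_allOnesTribes {y : Fin s × Fin w → Bool} {i : Fin s} :
    i ∈ allOnesTribes y ↔ ∀ j, y (i, j) = true := by
  simp [allOnesTribes]

lemma tribes_iff_nonempty_allOnesTribes {y : Fin s × Fin w → Bool} :
    tribes s w y ↔ (allOnesTribes y).Nonempty := by
  simp [tribes, Finset.Nonempty, mem_allOnesTribes]

lemma allOnesTribes_fillTribes {x : Fin s × Fin w → Bool} (hx : ¬ tribes s w x)
    (T : Finset (Fin s)) : allOnesTribes (fillTribes T x) = T := by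
  ext i
  by_cases hi : i ∈ T
  · simp [mem_allOnesTribes, fillTribes, hi]
  · simpa [mem_allOnesTribes, fillTribes, hi] using fun h => hx ⟨i, h⟩

lemma fillTribes_allOnesTribes_eq_iff {x y : Fin s × Fin w → Bool} :
    fillTribes (allOnesTribes y) x = y ↔ ∀ i ∉ allOnesTribes y, ∀ j, x (i, j) = y (i, j) := by
  refine ⟨fun h i hi j => by simpa [fillTribes, hi] using congrFun h (i, j), fun h => ?_⟩
  funext ⟨i, j⟩
  by_cases hi : i ∈ allOnesTribes y
  · simp [fillTribes, hi, mem_allOnesTribes.mp hi j]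
  · simp [fillTribes, hi, h i hi j]

lemma hammingDist_fillTribes_le (T : Finset (Fin s)) (x : Fin s × Fin w → Bool) :
    hammingDist x (fillTribes T x) ≤ #T * w := by
  calc hammingDist x (fillTribes T x) ≤ #(T ×ˢ (univ : Finset (Fin w))) := by
        refine card_le_card fun ij hij => ?_
        by_contra hT
        simp_all [fillTribes]
    _ = #T * w := by simp

lemma card_notAllOnes : #(notAllOnes w) = 2 ^ w - 1 := by
  simp [notAllOnes, card_erase_of_mem]

lemma mem_notAllOnes {g : Fin w → Bool} : g ∈ notAllOnes w ↔ ¬ ∀ j, g j = true := by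
  simp [notAllOnes, funext_iff]

lemma card_filter_forall_row_mem (A : Fin s → Finset (Fin w → Bool)) :
    #(univ.filter fun x : Fin s × Fin w → Bool => ∀ i, (fun j => x (i, j)) ∈ A i) =
      ∏ i, #(A i) := by
  rw [← Fintype.card_piFinset]
  exact card_equiv (Equiv.curry _ _ _) fun x => by simp [Fintype.mem_piFinset]; rfl

lemma card_filter_not_tribes :
    #(univ.filter fun x : Fin s × Fin w → Bool => ¬ tribes s w x) = (2 ^ w - 1) ^ s := by
  have h := card_filter_forall_row_mem (s := s) fun _ => notAllOnes w
  simp only [mem_notAllOnes, card_notAllOnes, prod_const, card_univ, Fintype.card_fin] at h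
  simpa [tribes] using h

lemma card_filter_mem_allOnesTribes (i : Fin s) :
    #(univ.filter fun y : Fin s × Fin w → Bool => i ∈ allOnesTribes y) = (2 ^ w) ^ (s - 1) := by
  let A : Fin s → Finset (Fin w → Bool) := fun i' => if i' = i then {fun _ => true} else univ
  have hA : ∀ y : Fin s × Fin w → Bool,
      i ∈ allOnesTribes y ↔ ∀ i', (fun j => y (i', j)) ∈ A i' := fun y => by
    refine ⟨fun h i' => ?_, fun h => mem_allOnesTribes.mpr fun j => ?_⟩
    · by_cases hi : i' = i
      · simp [A, hi, mem_allOnesTribes.mp h]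
      · simp [A, hi]
    · simpa [A] using congrFun (by simpa [A] using h i) j
  rw [filter_congr fun y _ => hA y, card_filter_forall_row_mem]
  simp [A, apply_ite card, prod_ite, filter_ne', card_erase_of_mem]

lemma card_filter_isTribesFill {y : Fin s × Fin w → Bool} (hy : tribes s w y) :
    #(univ.filter fun x => IsTribesFill x y) = (2 ^ w - 1) ^ #(allOnesTribes y) := by
  let A : Fin s → Finset (Fin w → Bool) := fun i =>
    if i ∈ allOnesTribes y then notAllOnes w else {fun j => y (i, j)}
  have hA : ∀ x, IsTribesFill x y ↔ ∀ i, (fun j => x (i, j)) ∈ A i := by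
    intro x
    simp only [IsTribesFill, hy, true_and, fillTribes_allOnesTribes_eq_iff]
    constructor
    · rintro ⟨hx, hxy⟩ i
      by_cases hi : i ∈ allOnesTribes y
      · simpa only [A, hi, if_true, mem_notAllOnes] using fun h => hx ⟨i, h⟩
      · simpa [A, hi, funext_iff] using hxy i hi
    · intro h
      have hrow : ∀ i ∉ allOnesTribes y, ∀ j, x (i, j) = y (i, j) := fun i hi j => by
        simpa [A, hi] using congrFun (by simpa [A, hi] using h i) j
      refine ⟨fun ⟨i, hi⟩ => ?_, hrow⟩
      by_cases hiy : i ∈ allOnesTribes y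
      · simpa [A, hiy, mem_notAllOnes, hi] using h i
      · exact hiy (mem_allOnesTribes.mpr fun j => hrow i hiy j ▸ hi j)
  rw [filter_congr fun x _ => hA x, card_filter_forall_row_mem]
  simp only [A, apply_ite card, card_notAllOnes, card_singleton]
  rw [prod_ite_mem, univ_inter, prod_const]

lemma sum_ite_isTribesFill {β : Type*} [AddCommMonoid β] {x : Fin s × Fin w → Bool}
    (hx : ¬ tribes s w x) (F : Finset (Fin s) → β) :
    ∑ y, (if IsTribesFill x y then F (allOnesTribes y) else 0) = ∑ T ∈ univ.erase ∅, F T := by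
  rw [← sum_filter]
  refine sum_nbij' allOnesTribes (fillTribes · x) ?_ ?_ ?_ ?_ fun _ _ => rfl
  · intro y hy
    simpa [nonempty_iff_ne_empty] using
      tribes_iff_nonempty_allOnesTribes.mp (mem_filter.mp hy).2.2.1
  · intro T hT
    simpa [IsTribesFill, hx, allOnesTribes_fillTribes hx, tribes_iff_nonempty_allOnesTribes,
      nonempty_iff_ne_empty] using hT
  · intro y hy
    exact (mem_filter.mp hy).2.2.2
  · intro T _
    exact allOnesTribes_fillTribes hx T

lemma card_filter_tribes :
    (#(univ.filter fun y : Fin s × Fin w → Bool => tribes s w y) : ℝ) =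
      ((2 : ℝ) ^ w) ^ s - (2 ^ w - 1) ^ s := by
  have h := card_filter_add_card_filter_not (s := (univ : Finset (Fin s × Fin w → Bool)))
    (tribes s w)
  rw [card_filter_not_tribes, card_univ] at h
  have h' : (#(univ.filter fun y : Fin s × Fin w → Bool => tribes s w y) : ℝ) +
      ((2 ^ w - 1 : ℕ) : ℝ) ^ s = ((2 : ℝ) ^ w) ^ s := by
    exact_mod_cast h.trans (by simp [← pow_mul, mul_comm])
  rw [Nat.cast_sub Nat.one_le_two_pow] at h'
  push_cast at h'
  linarith

lemma card_filter_tribes_pos (hs : 0 < s) :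
    0 < #(univ.filter fun y : Fin s × Fin w → Bool => tribes s w y) :=
  card_pos.mpr ⟨fun _ => true, mem_filter.mpr ⟨mem_univ _, ⟨0, hs⟩, fun _ => rfl⟩⟩

lemma tribesUnif_of_tribes {y : Fin s × Fin w → Bool} (hy : tribes s w y) :
    tribesUnif s w True y = 1 / #(univ.filter fun z : Fin s × Fin w → Bool => tribes s w z) := by
  simp [tribesUnif, hy]

lemma tribesUnif_of_not_tribes {x : Fin s × Fin w → Bool} (hx : ¬ tribes s w x) :
    tribesUnif s w False x = 1 / ((2 : ℝ) ^ w - 1) ^ s := by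
  simp [tribesUnif, hx, card_filter_not_tribes, Nat.cast_sub Nat.one_le_two_pow]

lemma tribesUnif_eq_zero {b : Prop} {x : Fin s × Fin w → Bool} (hx : ¬ (tribes s w x ↔ b)) :
    tribesUnif s w b x = 0 :=
  if_neg hx

/-- `P(allOnesTribes y = T)` for `y ~ tribesUnif s w True` and `T ≠ ∅`: each of the other
`s - #T` tribes is one of the `2 ^ w - 1` rows that are not all-ones. -/
noncomputable def allOnesTribesLaw (s w : ℕ) (T : Finset (Fin s)) : ℝ :=
  ((2 : ℝ) ^ w - 1) ^ (s - #T) / #(univ.filter fun y : Fin s × Fin w → Bool => tribes s w y)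

lemma sum_allOnesTribesLaw (hs : 0 < s) :
    ∑ T ∈ univ.erase ∅, allOnesTribesLaw s w T = 1 := by
  have hbinom := Fintype.sum_pow_mul_eq_add_pow (Fin s) (1 : ℝ) (2 ^ w - 1)
  simp only [one_pow, one_mul, Fintype.card_fin, add_sub_cancel] at hbinom
  unfold allOnesTribesLaw
  rw [← sum_div, sum_erase_eq_sub (mem_univ _), hbinom, card_empty, Nat.sub_zero,
    ← card_filter_tribes, div_self (by exact_mod_cast (card_filter_tribes_pos hs).ne')]

noncomputable def meanAllOnesTribes (s w : ℕ) : ℝ :=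
  ∑ y : Fin s × Fin w → Bool, #(allOnesTribes y) * tribesUnif s w True y

lemma sum_card_allOnesTribes :
    ∑ y : Fin s × Fin w → Bool, #(allOnesTribes y) = s * (2 ^ w) ^ (s - 1) := by
  simp only [allOnesTribes, card_eq_sum_ones (univ.filter _), sum_filter]
  rw [sum_comm]
  simp [← mem_allOnesTribes, card_filter_mem_allOnesTribes]

lemma meanAllOnesTribes_eq (hs : 0 < s) :
    meanAllOnesTribes s w = s * (2 : ℝ) ^ (-(w : ℤ)) / (1 - (1 - (2 : ℝ) ^ (-(w : ℤ))) ^ s) := by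
  have hterm : ∀ y : Fin s × Fin w → Bool, #(allOnesTribes y) * tribesUnif s w True y =
      #(allOnesTribes y) / #(univ.filter fun z : Fin s × Fin w → Bool => tribes s w z) := by
    intro y
    by_cases hy : tribes s w y
    · rw [tribesUnif_of_tribes hy, mul_one_div]
    · have : allOnesTribes y = ∅ := by
        simpa [not_nonempty_iff_eq_empty] using mt tribes_iff_nonempty_allOnesTribes.mpr hy
      simp [this]
  have hsum : ∑ y : Fin s × Fin w → Bool, (#(allOnesTribes y) : ℝ) =
      s * ((2 : ℝ) ^ w) ^ (s - 1) := by
    exact_mod_cast sum_card_allOnesTribes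
  have hN : ((2 : ℝ) ^ w) ^ s - (2 ^ w - 1) ^ s ≠ 0 := by
    rw [← card_filter_tribes]
    exact_mod_cast (card_filter_tribes_pos hs).ne'
  obtain ⟨t, rfl⟩ : ∃ t, s = t + 1 := ⟨s - 1, by omega⟩
  rw [meanAllOnesTribes, sum_congr rfl fun y _ => hterm y, ← sum_div, hsum, Nat.add_sub_cancel,
    card_filter_tribes, zpow_neg, zpow_natCast,
    show 1 - ((2 : ℝ) ^ w)⁻¹ = (2 ^ w - 1) / 2 ^ w by field_simp, div_pow]
  field_simp
  ring

noncomputable def tribesCoupling (s w : ℕ) (x y : Fin s × Fin w → Bool) : ℝ :=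
  if IsTribesFill x y then tribesUnif s w False x * allOnesTribesLaw s w (allOnesTribes y)
  else 0

lemma tribesCoupling_nonneg (x y : Fin s × Fin w → Bool) : 0 ≤ tribesCoupling s w x y := by
  have : (1 : ℝ) ≤ 2 ^ w := one_le_pow₀ one_le_two
  unfold tribesCoupling tribesUnif allOnesTribesLaw
  split_ifs <;> positivity

lemma sum_tribesCoupling_snd (hs : 0 < s) (x : Fin s × Fin w → Bool) :
    ∑ y, tribesCoupling s w x y = tribesUnif s w False x := by
  by_cases hx : tribes s w x
  · rw [tribesUnif_eq_zero (by simpa using hx)]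
    exact sum_eq_zero fun y _ => if_neg fun h => h.1 hx
  · unfold tribesCoupling
    rw [sum_ite_isTribesFill hx fun T => tribesUnif s w False x * allOnesTribesLaw s w T,
      ← mul_sum, sum_allOnesTribesLaw hs, mul_one]

lemma sum_tribesCoupling_fst (hw : 0 < w) (y : Fin s × Fin w → Bool) :
    ∑ x, tribesCoupling s w x y = tribesUnif s w True y := by
  by_cases hy : tribes s w y
  · have hm : (2 : ℝ) ^ w - 1 ≠ 0 := by
      linarith [one_lt_pow₀ (one_lt_two (α := ℝ)) hw.ne']
    have hk : #(allOnesTribes y) ≤ s := card_le_univ _ |>.trans (Fintype.card_fin s).le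
    have hterm : ∀ x, tribesCoupling s w x y = if IsTribesFill x y then
        1 / ((2 : ℝ) ^ w - 1) ^ s * allOnesTribesLaw s w (allOnesTribes y) else 0 := fun x => by
      unfold tribesCoupling
      split_ifs with h
      · rw [tribesUnif_of_not_tribes h.1]
      · rfl
    simp only [hterm, sum_ite, sum_const_zero, add_zero, sum_const,
      card_filter_isTribesFill hy, nsmul_eq_mul, tribesUnif_of_tribes hy, allOnesTribesLaw]
    push_cast [Nat.cast_sub Nat.one_le_two_pow]
    field_simp
    rw [← pow_add, Nat.add_sub_cancel' hk]
  · rw [tribesUnif_eq_zero (by simpa using hy)]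
    exact sum_eq_zero fun x _ => if_neg fun h => hy h.2.1

lemma sum_hammingDist_mul_tribesCoupling_le (hw : 0 < w) :
    ∑ x, ∑ y, (hammingDist x y : ℝ) * tribesCoupling s w x y ≤ meanAllOnesTribes s w * w := by
  calc ∑ x, ∑ y, (hammingDist x y : ℝ) * tribesCoupling s w x y
      ≤ ∑ x, ∑ y, ((#(allOnesTribes y) * w : ℕ) : ℝ) * tribesCoupling s w x y := by
        refine sum_le_sum fun x _ => sum_le_sum fun y _ => ?_
        by_cases h : IsTribesFill x y
        · refine mul_le_mul_of_nonneg_right ?_ (tribesCoupling_nonneg x y)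
          have hdist := hammingDist_fillTribes_le (allOnesTribes y) x
          rw [h.2.2] at hdist
          exact_mod_cast hdist
        · simp [tribesCoupling, h]
    _ = meanAllOnesTribes s w * w := by
        rw [sum_comm, meanAllOnesTribes, sum_mul]
        refine sum_congr rfl fun y _ => ?_
        rw [← mul_sum, sum_tribesCoupling_fst hw]
        push_cast
        ring

theorem W1_tribesUnif_le (hw : 0 < w) (hs : 0 < s) :
    W1 (fun x y : Fin s × Fin w → Bool => (hammingDist x y : ℝ))
      (tribesUnif s w False) (tribesUnif s w True) ≤ meanAllOnesTribes s w * w :=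
  (W1_le_of_coupling (fun _ _ => Nat.cast_nonneg _) (tribesCoupling s w) tribesCoupling_nonneg
    (sum_tribesCoupling_snd hs) (sum_tribesCoupling_fst hw)).trans
    (sum_hammingDist_mul_tribesCoupling_le hw)

lemma meanAllOnesTribes_mul_le_log (hw : 2 ≤ w) (hs : 0 < s)
    (h₁ : 1 - (1 - (2 : ℝ) ^ (-(w : ℤ))) ^ s ≤ 1 / 2)
    (h₂ : 1 / 2 < 1 - (1 - (2 : ℝ) ^ (-(w : ℤ))) ^ (s + 1)) :
    meanAllOnesTribes s w * w ≤ 3 * Real.log (s * w) := by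
  rw [meanAllOnesTribes_eq hs]
  simp only [zpow_neg, zpow_natCast] at h₁ h₂ ⊢
  have hM : (4 : ℝ) ≤ 2 ^ w :=
    calc (4 : ℝ) = 2 ^ 2 := by norm_num
      _ ≤ 2 ^ w := pow_le_pow_right₀ one_le_two hw
  set p : ℝ := ((2 : ℝ) ^ w)⁻¹ with hp
  have hp0 : 0 < p := by positivity
  have hp4 : p ≤ 1 / 4 := by rw [hp, one_div]; exact inv_anti₀ (by norm_num) hM
  have hsp : s * p ≤ Real.log 2 := mul_le_log_two_of_half_le_one_sub_pow (by linarith) (by linarith)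
  have hD : 1 / 3 ≤ 1 - (1 - p) ^ s := by
    have : 0 ≤ (1 - p) ^ s := pow_nonneg (by linarith) s
    rw [pow_succ] at h₂
    nlinarith
  have hwidth : 2 ^ w ≤ s * w := by
    have hlt : (2 : ℝ) ^ w < 2 * ((s + 1 : ℕ) : ℝ) :=
      lt_two_mul_of_one_sub_inv_pow_lt_half (by linarith) (by linarith)
    have hlt' : 2 ^ w < 2 * (s + 1) := by exact_mod_cast hlt
    have heven : 2 ^ w = 2 * 2 ^ (w - 1) := by rw [← pow_succ']; congr 1; omega
    calc 2 ^ w ≤ 2 * s := by omega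
      _ ≤ s * w := by rw [mul_comm]; exact Nat.mul_le_mul_left s hw
  have hlog : w * Real.log 2 ≤ Real.log (s * w) := by
    rw [← Real.log_pow]
    exact Real.log_le_log (by positivity) (by exact_mod_cast hwidth)
  calc s * p / (1 - (1 - p) ^ s) * w ≤ 3 * (s * p) * w := by
        gcongr
        rw [div_le_iff₀ (by linarith)]
        nlinarith [mul_le_mul_of_nonneg_left hD (by positivity : (0 : ℝ) ≤ 3 * (s * p))]
    _ ≤ 3 * Real.log 2 * w := by gcongr
    _ ≤ 3 * Real.log (s * w) := by nlinarith

end Tribes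

/-- For the (near-balanced) tribes function, `W₁(μ⁰, μ¹) = O(log n)`: concretely, the
transport cost is at most `E[L]·w` where `L ~ Bin(s, 2^{-w})` conditioned on being
positive, and `E[L]·w = s·2^{-w}/(1 − (1 − 2^{-w})^s) · w ≤ C·log(sw)`. -/
theorem stmt18 :
    ∃ C : ℝ, 0 < C ∧ ∀ w s : ℕ, 2 ≤ w → 0 < s →
      1 - (1 - (2 : ℝ) ^ (-(w : ℤ))) ^ s ≤ 1 / 2 →
      1 / 2 < 1 - (1 - (2 : ℝ) ^ (-(w : ℤ))) ^ (s + 1) →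
      W1 (fun x y : Fin s × Fin w → Bool => (hammingDist x y : ℝ))
          (tribesUnif s w False) (tribesUnif s w True) ≤
        (s * (2 : ℝ) ^ (-(w : ℤ)) / (1 - (1 - (2 : ℝ) ^ (-(w : ℤ))) ^ s)) * w ∧
      (s * (2 : ℝ) ^ (-(w : ℤ)) / (1 - (1 - (2 : ℝ) ^ (-(w : ℤ))) ^ s)) * w ≤
        C * Real.log (s * w) := by
  refine ⟨3, by norm_num, fun w s hw hs h₁ h₂ => ?_⟩
  rw [← Tribes.meanAllOnesTribes_eq hs]
  exact ⟨Tribes.W1_tribesUnif_le (by omega) hs, Tribes.meanAllOnesTribes_mul_le_log hw hs h₁ h₂⟩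
end
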